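/- Let n ≥ D and let j = [j_1, …, j_D] be a tuple of D pairwise distinct elements of {1, …, n}. Then there exists a unique element g of the set H_D = {σ_D σ_{D-1} ⋯ σ_1 : σ_i ∈ C_{n-D+i}} such that g · j_d = d for all d = 1, …, D, where C_{n-i} denotes the cyclic group of order n-i acting cyclically on the set {i+1, …, n} and fixing {1, …, i} pointwise. Consequently, the map j ↦ g is a bijection from the set of D-tuples of distinct elements of {1, …, n} to H_D. -/

import Mathlib

/-- The equivalence between `Fin (n - i)` and the elements of `Fin n` that are `≥ i`. -/
def shiftEquiv (n i : ℕ) : Fin (n - i) ≃ {j : Fin n // i ≤ (j : ℕ)} where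
  toFun k := ⟨⟨i + k.val, by omega⟩, by simp⟩
  invFun j := ⟨(j : Fin n).val - i, by omega⟩
  left_inv k := by ext; simp
  right_inv j := by
    apply Subtype.ext
    apply Fin.ext
    have := j.2
    simp
    omega

/-- The cyclic permutation of order `n - i` on `{i+1, …, n}` (0-indexed: on the
elements of `Fin n` that are `≥ i`), fixing `{1, …, i}` pointwise.
Its powers form the cyclic group `C_{n-i}` of the paper. -/
def cyc (n i : ℕ) : Equiv.Perm (Fin n) :=
  (finRotate (n - i)).extendDomain (shiftEquiv n i)

/-- `H_D = {σ_D ⋯ σ_1 : σ_i ∈ C_{n-D+i}}`: the set of products of one element of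
each cyclic group `C_{n-D+i}` (the factor from `C_n` being applied first, then the
factor from `C_{n-1}`, …, the factor from `C_{n-D+1}` applied last). -/
def HD (n D : ℕ) : Set (Equiv.Perm (Fin n)) :=
  {g | ∃ σ : Fin D → Equiv.Perm (Fin n),
    (∀ d : Fin D, σ d ∈ Subgroup.zpowers (cyc n d.val)) ∧
      g = (List.ofFn σ).reverse.prod}

/-!
Existence is by induction on `D`. Once `g ∈ H_D` sends `j₀, …, j_{D-1}` to `0, …, D-1`,
injectivity forces `g j_D ≥ D`, and a power of the rotation of `{D, …, n-1}` moves it to `D`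
while fixing `0, …, D-1`. Uniqueness is a count: `H_D` has at most `n (n-1) ⋯ (n-D+1)`
elements, the number of injective `D`-tuples, so the surjection `g ↦ g⁻¹ (0, …, D-1)` from
`H_D` onto these tuples is a bijection.
-/

open Equiv Subgroup

lemma natCard_injective_eq_descFactorial (α β : Type*) [Fintype α] [Fintype β] :
    Nat.card {f : α → β // Function.Injective f} =
      (Fintype.card β).descFactorial (Fintype.card α) := by
  classical
  rw [Nat.card_congr (Equiv.subtypeInjectiveEquivEmbedding α β), Nat.card_eq_fintype_card,
    Fintype.card_embedding_eq]

section finRotate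

open Fin.NatCast

lemma finRotate_pow_apply {m : ℕ} [NeZero m] (k : ℕ) (i : Fin m) :
    (finRotate m ^ k) i = i + k := by
  induction k with
  | zero => simp
  | succ k ih =>
    rw [pow_succ', Perm.mul_apply, ih, finRotate_apply]
    push_cast
    abel

lemma finRotate_pow_self (m : ℕ) : finRotate m ^ m = 1 := by
  rcases m.eq_zero_or_pos with rfl | hm
  · rfl
  · have : NeZero m := ⟨hm.ne'⟩
    ext i
    simp [finRotate_pow_apply]

lemma exists_finRotate_pow_apply_eq {m : ℕ} (a b : Fin m) :
    ∃ k : ℕ, (finRotate m ^ k) a = b := by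
  have := a.neZero
  exact ⟨(b - a).val, by rw [finRotate_pow_apply, Fin.cast_val_eq_self]; abel⟩

end finRotate

section cyc

variable {n i : ℕ}

lemma cyc_pow_sub_self : cyc n i ^ (n - i) = 1 := by
  rw [cyc, ← Perm.extendDomain_pow, finRotate_pow_self, Perm.extendDomain_one]

lemma card_zpowers_cyc_le (hi : i < n) : Nat.card (zpowers (cyc n i)) ≤ n - i := by
  rw [Nat.card_zpowers]
  exact orderOf_le_of_pow_eq_one (by omega) cyc_pow_sub_self

lemma apply_eq_self_of_mem_zpowers_cyc {σ : Perm (Fin n)} (hσ : σ ∈ zpowers (cyc n i))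
    {x : Fin n} (hx : (x : ℕ) < i) : σ x = x := by
  obtain ⟨k, rfl⟩ := mem_zpowers_iff.mp hσ
  exact Function.IsFixedPt.perm_zpow
    (Perm.extendDomain_apply_not_subtype _ (shiftEquiv n i) (by omega)) k

lemma exists_mem_zpowers_cyc_apply_eq {a b : Fin n} (ha : i ≤ (a : ℕ)) (hb : i ≤ (b : ℕ)) :
    ∃ σ ∈ zpowers (cyc n i), σ a = b := by
  obtain ⟨k, hk⟩ := exists_finRotate_pow_apply_eq
    ((shiftEquiv n i).symm ⟨a, ha⟩) ((shiftEquiv n i).symm ⟨b, hb⟩)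
  refine ⟨cyc n i ^ k, npow_mem_zpowers _ _, ?_⟩
  rw [cyc, ← Perm.extendDomain_pow,
    Perm.extendDomain_apply_subtype (finRotate (n - i) ^ k) (shiftEquiv n i) ha, hk,
    Equiv.apply_symm_apply]

end cyc

section HD

variable {n D : ℕ}

lemma one_mem_HD_zero : (1 : Perm (Fin n)) ∈ HD n 0 :=
  ⟨Fin.elim0, fun d => d.elim0, rfl⟩

lemma mul_mem_HD_succ {τ g : Perm (Fin n)} (hτ : τ ∈ zpowers (cyc n D)) (hg : g ∈ HD n D) :
    τ * g ∈ HD n (D + 1) := by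
  obtain ⟨σ, hσ, rfl⟩ := hg
  refine ⟨Fin.snoc σ τ, Fin.lastCases (by simpa using hτ) (by simpa using hσ), ?_⟩
  rw [List.ofFn_succ']
  simp

lemma card_HD_le (hD : D ≤ n) : Nat.card (HD n D) ≤ n.descFactorial D := by
  have hrange : HD n D = Set.range fun σ : ∀ d : Fin D, zpowers (cyc n d) =>
      (List.ofFn fun d => (σ d : Perm (Fin n))).reverse.prod := by
    ext g
    constructor
    · rintro ⟨σ, hσ, rfl⟩
      exact ⟨fun d => ⟨σ d, hσ d⟩, rfl⟩
    · rintro ⟨σ, rfl⟩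
      exact ⟨_, fun d => (σ d).2, rfl⟩
  calc Nat.card (HD n D)
      ≤ Nat.card (∀ d : Fin D, zpowers (cyc n d)) := hrange ▸ Finite.card_range_le _
    _ = ∏ d : Fin D, Nat.card (zpowers (cyc n d)) := Nat.card_pi
    _ ≤ ∏ d : Fin D, (n - d) :=
      Finset.prod_le_prod' fun d _ => card_zpowers_cyc_le (by omega)
    _ = n.descFactorial D := by
      rw [Fin.prod_univ_eq_prod_range (n - ·), Nat.descFactorial_eq_prod_range]

lemma exists_mem_HD_apply_eq (hD : D ≤ n) (j : Fin D → Fin n) (hj : Function.Injective j) :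
    ∃ g ∈ HD n D, ∀ d, g (j d) = Fin.castLE hD d := by
  induction D with
  | zero => exact ⟨1, one_mem_HD_zero, fun d => d.elim0⟩
  | succ D ih =>
    obtain ⟨g, hg, hgj⟩ := ih (by omega) (j ∘ Fin.castSucc) (hj.comp (Fin.castSucc_injective D))
    have hle : D ≤ (g (j (Fin.last D)) : ℕ) := by
      by_contra! hlt
      have hjlast : j (Fin.castSucc ⟨_, hlt⟩) = j (Fin.last D) :=
        g.injective ((hgj ⟨_, hlt⟩).trans (Fin.ext rfl))
      exact Fin.castSucc_ne_last _ (hj hjlast)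
    obtain ⟨τ, hτ, hτg⟩ := exists_mem_zpowers_cyc_apply_eq (b := ⟨D, hD⟩) hle le_rfl
    refine ⟨τ * g, mul_mem_HD_succ hτ hg, Fin.lastCases ?_ fun d => ?_⟩
    · rw [Perm.mul_apply, hτg]
      rfl
    · have hd : g (j (Fin.castSucc d)) = Fin.castLE (by omega) d := hgj d
      rw [Perm.mul_apply, hd, apply_eq_self_of_mem_zpowers_cyc hτ (by simp)]
      rfl

def preimageTuple (hD : D ≤ n) (g : Perm (Fin n)) :
    {j : Fin D → Fin n // Function.Injective j} :=
  ⟨fun d => g.symm (Fin.castLE hD d), g.symm.injective.comp (Fin.castLE_injective hD)⟩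

lemma preimageTuple_eq_iff {hD : D ≤ n} {g : Perm (Fin n)}
    {j : {j : Fin D → Fin n // Function.Injective j}} :
    preimageTuple hD g = j ↔ ∀ d, g (j.1 d) = Fin.castLE hD d := by
  simp only [preimageTuple, Subtype.ext_iff, funext_iff, Equiv.symm_apply_eq]
  exact forall_congr' fun _ => eq_comm

lemma bijective_preimageTuple_HD (hD : D ≤ n) :
    Function.Bijective fun g : HD n D => preimageTuple hD g := by
  have hsurj : Function.Surjective fun g : HD n D => preimageTuple hD g := fun j => by
    obtain ⟨g, hg, hgj⟩ := exists_mem_HD_apply_eq hD j.1 j.2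
    exact ⟨⟨g, hg⟩, preimageTuple_eq_iff.mpr hgj⟩
  refine (Nat.bijective_iff_surjective_and_card _).mpr ⟨hsurj, le_antisymm ?_ ?_⟩
  · rw [natCard_injective_eq_descFactorial, Fintype.card_fin, Fintype.card_fin]
    exact card_HD_le hD
  · exact Nat.card_le_card_of_surjective _ hsurj

end HD

/-- **Normalization (Lemma 2).** Let `n ≥ D` and let `j` be a tuple of `D` pairwise
distinct elements of `Fin n`. Then there is a unique `g ∈ H_D` with `g (j d) = d` for
all `d`; consequently `j ↦ g` is a bijection from injective `D`-tuples onto `H_D`. -/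
theorem HD_normalization (n D : ℕ) (hD : D ≤ n) :
    (∀ j : Fin D → Fin n, Function.Injective j →
      ∃! g : Equiv.Perm (Fin n),
        g ∈ HD n D ∧ ∀ d : Fin D, g (j d) = Fin.castLE hD d) ∧
    ∃ e : {j : Fin D → Fin n // Function.Injective j} ≃ HD n D,
      ∀ (j : {j : Fin D → Fin n // Function.Injective j}) (d : Fin D),
        (e j : Equiv.Perm (Fin n)) ((j : Fin D → Fin n) d) = Fin.castLE hD d := by
  have hbij := bijective_preimageTuple_HD hD
  refine ⟨fun j hj => ?_, (Equiv.ofBijective _ hbij).symm, fun j d => ?_⟩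
  · obtain ⟨⟨g, hg⟩, hgj⟩ := hbij.surjective ⟨j, hj⟩
    refine ⟨g, ⟨hg, preimageTuple_eq_iff.mp hgj⟩, fun g' ⟨hg', hg'j⟩ => ?_⟩
    have hg'g : (⟨g', hg'⟩ : HD n D) = ⟨g, hg⟩ :=
      hbij.injective ((preimageTuple_eq_iff.mpr hg'j).trans hgj.symm)
    exact congrArg Subtype.val hg'g
  · exact preimageTuple_eq_iff.mp ((Equiv.ofBijective _ hbij).apply_symm_apply j) d
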